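/- arXiv:0707.0323 — 5 statements merged into one kernel-verified Lean document; each statement's English description precedes it below -/
import Mathlib

section
/- Fix a natural number n ≥ 1 and let M = 2n+1. For Lebesgue-almost every pair of vectors (λ, κ) ∈ ℝ^M × ℝ^M, the M × M real matrix S whose l-th row is (1, λ_l, λ_l², …, λ_l^n, κ_l, κ_l λ_l, …, κ_l λ_l^{n-1}) is invertible (equivalently, det S ≠ 0 for almost every (λ, κ)). -/
/-!
Substituting `κ_l = λ_l^(n+1)` turns the matrix into the Vandermonde matrix of `λ`, so its
determinant, viewed as a polynomial in the `2(2n+1)` entries of `(λ, κ)`, is not the zero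
polynomial. A nonzero real polynomial vanishes only on a Lebesgue-null set: by Fubini, peeling
off one variable at a time, since for almost every value of the remaining variables the
leading coefficient in the first one is nonzero, leaving finitely many roots.
-/

open MeasureTheory Matrix

namespace Polynomial

theorem ae_eval_ne_zero {f : ℝ[X]} (hf : f ≠ 0) : ∀ᵐ y : ℝ, f.eval y ≠ 0 := by
  rw [ae_iff]
  simpa using (finite_setOfPred_isRoot hf).measure_zero volume

end Polynomial

namespace MvPolynomial

theorem ae_eval_ne_zero_fin : ∀ {m : ℕ} {p : MvPolynomial (Fin m) ℝ}, p ≠ 0 →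
    ∀ᵐ x : Fin m → ℝ, eval x p ≠ 0
  | 0, p, hp => by
    obtain ⟨a, rfl⟩ := C_surjective (Fin 0) p
    exact .of_forall fun x => by simpa using hp
  | m + 1, p, hp => by
    set q := finSuccEquiv ℝ m p
    have hq : q ≠ 0 := (EmbeddingLike.map_ne_zero_iff).2 hp
    have hfiber : ∀ᵐ s : Fin m → ℝ, ∀ᵐ y : ℝ, eval (Fin.cons y s) p ≠ 0 := by
      filter_upwards [ae_eval_ne_zero_fin (Polynomial.leadingCoeff_ne_zero.2 hq)] with s hs
      have hmap : q.map (eval s) ≠ 0 := fun h => hs <| by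
        simpa [Polynomial.coeff_map] using congrArg (Polynomial.coeff · q.natDegree) h
      simpa only [eval_eq_eval_mv_eval'] using Polynomial.ae_eval_ne_zero hmap
    have hmeas : Measurable fun z : ℝ × (Fin m → ℝ) => eval (Fin.cons z.1 z.2) p :=
      (continuous_eval p).measurable.comp (by fun_prop)
    have hprod : ∀ᵐ z : ℝ × (Fin m → ℝ), eval (Fin.cons z.1 z.2) p ≠ 0 := by
      refine (Measure.ae_prod_iff_ae_ae (hmeas (measurableSet_singleton 0).compl)).2 ?_
      refine (Measure.ae_ae_comm ?_).1 hfiber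
      exact (hmeas.comp measurable_swap) (measurableSet_singleton 0).compl
    filter_upwards [(volume_preserving_piFinSuccAbove (fun _ => ℝ) 0).quasiMeasurePreserving.ae
      hprod] with x hx
    simpa [MeasurableEquiv.piFinSuccAbove] using hx

theorem ae_eval_ne_zero {σ : Type*} [Fintype σ] {p : MvPolynomial σ ℝ} (hp : p ≠ 0) :
    ∀ᵐ x : σ → ℝ, eval x p ≠ 0 := by
  let e := Fintype.equivFin σ
  have hrename : rename e p ≠ 0 := (rename_injective e e.injective).ne_iff' (map_zero _) |>.2 hp
  filter_upwards [(volume_measurePreserving_piCongrLeft (fun _ => ℝ) e).quasiMeasurePreserving.ae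
    (ae_eval_ne_zero_fin hrename)] with x hx
  simpa [eval_rename, Function.comp_def, MeasurableEquiv.piCongrLeft] using hx

end MvPolynomial

def alignmentMatrix {R ι : Type*} [CommRing R] (n : ℕ) (a b : ι → R) :
    Matrix ι (Fin (2 * n + 1)) R :=
  Matrix.of fun l r =>
    if (r : ℕ) ≤ n then a l ^ (r : ℕ) else b l * a l ^ ((r : ℕ) - (n + 1))

theorem RingHom.map_alignmentMatrix {R S ι : Type*} [CommRing R] [CommRing S] (f : R →+* S)
    (n : ℕ) (a b : ι → R) :
    (alignmentMatrix n a b).map f = alignmentMatrix n (f ∘ a) (f ∘ b) := by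
  ext l r
  by_cases h : (r : ℕ) ≤ n <;> simp [alignmentMatrix, h]

theorem alignmentMatrix_pow_succ {R : Type*} [CommRing R] (n : ℕ) (a : Fin (2 * n + 1) → R) :
    alignmentMatrix n a (fun l => a l ^ (n + 1)) = vandermonde a := by
  ext l r
  by_cases h : (r : ℕ) ≤ n
  · simp [alignmentMatrix, h]
  · simp only [alignmentMatrix, vandermonde, of_apply, if_neg h, ← pow_add]
    congr 1
    omega

theorem stmt_0_general (n : ℕ) :
    ∀ᵐ p : (Fin (2*n+1) → ℝ) × (Fin (2*n+1) → ℝ) ∂volume,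
      (Matrix.of (fun l r : Fin (2*n+1) =>
        if (r : ℕ) ≤ n then p.1 l ^ (r : ℕ)
        else p.2 l * p.1 l ^ ((r : ℕ) - (n+1)))).det ≠ 0 := by
  let P : MvPolynomial (Fin (2 * n + 1) ⊕ Fin (2 * n + 1)) ℝ :=
    (alignmentMatrix n (fun l => .X (.inl l)) (fun l => .X (.inr l))).det
  have heval (w) : MvPolynomial.eval w P = (alignmentMatrix n (w ∘ .inl) (w ∘ .inr)).det := by
    rw [RingHom.map_det, RingHom.mapMatrix_apply, RingHom.map_alignmentMatrix]
    simp only [Function.comp_def, MvPolynomial.eval_X]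
  have hP : P ≠ 0 := by
    let v : Fin (2 * n + 1) → ℝ := fun l => (l : ℕ)
    have hv : (vandermonde v).det ≠ 0 :=
      det_vandermonde_ne_zero_iff.2 fun i j hij => Fin.val_injective (Nat.cast_injective hij)
    rw [← alignmentMatrix_pow_succ] at hv
    exact fun h => hv <| by simpa [h] using (heval (Sum.elim v fun l => v l ^ (n + 1))).symm
  exact (volume_measurePreserving_sumPiEquivProdPi_symm (fun _ => ℝ)).quasiMeasurePreserving.ae
    (MvPolynomial.ae_eval_ne_zero hP) |>.mono fun p hp => by rwa [heval] at hp

/-- For `n ≥ 1` and `M = 2n+1`, for Lebesgue-almost every pair of vectors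
`(λ, κ) ∈ ℝ^M × ℝ^M`, the `M × M` matrix whose `l`-th row is
`(1, λ_l, …, λ_l^n, κ_l, κ_l λ_l, …, κ_l λ_l^{n-1})` has nonzero determinant. -/
theorem stmt_0 (n : ℕ) (hn : 1 ≤ n) :
    ∀ᵐ p : (Fin (2*n+1) → ℝ) × (Fin (2*n+1) → ℝ) ∂volume,
      (Matrix.of (fun l r : Fin (2*n+1) =>
        if (r : ℕ) ≤ n then p.1 l ^ (r : ℕ)
        else p.2 l * p.1 l ^ ((r : ℕ) - (n+1)))).det ≠ 0 :=
  stmt_0_general n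
end

section
/- Fix n ≥ 1 and let H^{[ij]}, for i, j ∈ {1,2,3}, be invertible diagonal (2n+1)×(2n+1) complex matrices. Define T = H^{[12]} (H^{[21]})^{-1} H^{[23]} (H^{[32]})^{-1} H^{[31]} (H^{[13]})^{-1}, let w be the all-ones column vector, and set A = [w, Tw, T²w, …, T^n w], B = [Tw, T²w, …, T^n w], C = [w, Tw, …, T^{n−1} w]. Define V^{[1]} = A, V^{[3]} = (H^{[23]})^{-1} H^{[21]} B, and V^{[2]} = (H^{[32]})^{-1} H^{[31]} C. Then the interference alignment equations hold: (i) H^{[12]} V^{[2]} = H^{[13]} V^{[3]}; (ii) every column of H^{[23]} V^{[3]} is a column of H^{[21]} V^{[1]}; (iii) every column of H^{[32]} V^{[2]} is a column of H^{[31]} V^{[1]}. -/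
/-! Diagonal matrices commute, so `T` behaves like a scalar at each coordinate and
`H¹³ (H²³)⁻¹ H²¹ T = H¹² (H³²)⁻¹ H³¹`. Since the columns of `B` are `T` times those of `C`,
this gives `H¹²V² = H¹³V³`. For (ii) and (iii), `H²³V³ = H²¹B` and `H³²V² = H³¹C`, and the columns
of `B` and of `C` are columns of `A` (shifted by one for `B`). -/

open Matrix

namespace Matrix

variable {m ι R : Type*} [Fintype m]

section Semiring

variable [Semiring R]

theorem mul_apply_eq_of_forall_apply_eq {l o p : Type*} (M : Matrix l m R) {N : Matrix m o R}
    {N' : Matrix m p R} {j : o} {j' : p} (h : ∀ k, N k j = N' k j') :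
    (fun i => (M * N) i j) = fun i => (M * N') i j' := by
  funext i
  simp only [mul_apply, h]

variable [DecidableEq m]

theorem of_pow_succ_mulVec (T : Matrix m m R) (w : m → R) (f : ι → ℕ) :
    (of fun i j => (T ^ (f j + 1) *ᵥ w) i) = T * of fun i j => (T ^ f j *ᵥ w) i := by
  ext i j
  rw [of_apply, pow_succ', ← mulVec_mulVec]
  rfl

end Semiring

variable [CommRing R] [DecidableEq m]

theorem IsDiag.isUnit_diag {H : Matrix m m R} (hH : H.IsDiag) (hu : IsUnit H.det) :
    IsUnit H.diag := by
  rw [← isUnit_diagonal, hH.diagonal_diag]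
  exact (isUnit_iff_isUnit_det H).mpr hu

theorem alignment_identity_of_isDiag {H12 H13 H21 H23 H31 H32 : Matrix m m R}
    (hd12 : H12.IsDiag) (hd13 : H13.IsDiag) (hd21 : H21.IsDiag)
    (hd23 : H23.IsDiag) (hd31 : H31.IsDiag) (hd32 : H32.IsDiag)
    (hu13 : IsUnit H13.det) (hu21 : IsUnit H21.det) (hu23 : IsUnit H23.det) :
    H13 * (H23⁻¹ * H21) * (H12 * H21⁻¹ * H23 * H32⁻¹ * H31 * H13⁻¹) = H12 * (H32⁻¹ * H31) := by
  rw [← hd12.diagonal_diag, ← hd13.diagonal_diag, ← hd21.diagonal_diag, ← hd23.diagonal_diag,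
    ← hd31.diagonal_diag, ← hd32.diagonal_diag]
  simp only [inv_diagonal, diagonal_mul_diagonal]
  congr 1
  funext i
  have e13 : H13.diag i * Ring.inverse H13.diag i = 1 :=
    congrFun (Ring.mul_inverse_cancel _ (hd13.isUnit_diag hu13)) i
  have e21 : H21.diag i * Ring.inverse H21.diag i = 1 :=
    congrFun (Ring.mul_inverse_cancel _ (hd21.isUnit_diag hu21)) i
  have e23 : H23.diag i * Ring.inverse H23.diag i = 1 :=
    congrFun (Ring.mul_inverse_cancel _ (hd23.isUnit_diag hu23)) i
  -- the left side is the right side times the three factors equal to `1` in `e13`, `e21`, `e23`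
  linear_combination (H12.diag i * Ring.inverse H32.diag i * H31.diag i) *
    (H21.diag i * Ring.inverse H21.diag i * Ring.inverse H23.diag i * H23.diag i * e13
      + Ring.inverse H23.diag i * H23.diag i * e21 + e23)

end Matrix

theorem stmt_3_general (n : ℕ)
    (H12 H13 H21 H23 H31 H32 : Matrix (Fin (2*n+1)) (Fin (2*n+1)) ℂ)
    (hd12 : H12.IsDiag) (hd13 : H13.IsDiag) (hd21 : H21.IsDiag)
    (hd23 : H23.IsDiag) (hd31 : H31.IsDiag) (hd32 : H32.IsDiag)
    (hu13 : IsUnit H13.det) (hu21 : IsUnit H21.det)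
    (hu23 : IsUnit H23.det) (hu32 : IsUnit H32.det) :
    let T : Matrix (Fin (2*n+1)) (Fin (2*n+1)) ℂ :=
      H12 * H21⁻¹ * H23 * H32⁻¹ * H31 * H13⁻¹
    let w : Fin (2*n+1) → ℂ := fun _ => 1
    let A : Matrix (Fin (2*n+1)) (Fin (n+1)) ℂ :=
      Matrix.of fun i j => (T ^ (j : ℕ) *ᵥ w) i
    let B : Matrix (Fin (2*n+1)) (Fin n) ℂ :=
      Matrix.of fun i j => (T ^ ((j : ℕ) + 1) *ᵥ w) i
    let C : Matrix (Fin (2*n+1)) (Fin n) ℂ :=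
      Matrix.of fun i j => (T ^ (j : ℕ) *ᵥ w) i
    let V1 := A
    let V3 := H23⁻¹ * H21 * B
    let V2 := H32⁻¹ * H31 * C
    (H12 * V2 = H13 * V3) ∧
    (∀ j : Fin n, ∃ j' : Fin (n+1),
      (fun i => (H23 * V3) i j) = (fun i => (H21 * V1) i j')) ∧
    (∀ j : Fin n, ∃ j' : Fin (n+1),
      (fun i => (H32 * V2) i j) = (fun i => (H31 * V1) i j')) := by
  intro T w A B C V1 V3 V2
  have hB : B = T * C := of_pow_succ_mulVec T w (fun j : Fin n => (j : ℕ))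
  refine ⟨?_, fun j => ⟨j.succ, ?_⟩, fun j => ⟨j.castSucc, ?_⟩⟩
  · calc H12 * V2 = H12 * (H32⁻¹ * H31) * C := by simp only [V2, Matrix.mul_assoc]
      _ = H13 * (H23⁻¹ * H21) * T * C := by
        rw [alignment_identity_of_isDiag hd12 hd13 hd21 hd23 hd31 hd32 hu13 hu21 hu23]
      _ = H13 * V3 := by simp only [V3, hB, Matrix.mul_assoc]
  · have hV3 : H23 * V3 = H21 * B := by
      simp only [V3, Matrix.mul_assoc, mul_nonsing_inv_cancel_left _ _ hu23]
    rw [hV3]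
    exact mul_apply_eq_of_forall_apply_eq H21 fun _ => rfl
  · have hV2 : H32 * V2 = H31 * C := by
      simp only [V2, Matrix.mul_assoc, mul_nonsing_inv_cancel_left _ _ hu32]
    rw [hV2]
    exact mul_apply_eq_of_forall_apply_eq H31 fun _ => rfl

/-- The interference alignment construction for the 3-user interference channel over a
`(2n+1)`-symbol extension: with `T` the cyclic product of the (diagonal, invertible)
channel matrices, `A = [w, Tw, …, Tⁿw]`, `B = [Tw, …, Tⁿw]`, `C = [w, …, Tⁿ⁻¹w]`,
`V¹ = A`, `V³ = (H²³)⁻¹H²¹B`, `V² = (H³²)⁻¹H³¹C`, we have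
(i) `H¹²V² = H¹³V³`, (ii) every column of `H²³V³` is a column of `H²¹V¹`,
(iii) every column of `H³²V²` is a column of `H³¹V¹`. -/
theorem stmt_3 (n : ℕ) (hn : 1 ≤ n)
    (H12 H13 H21 H23 H31 H32 : Matrix (Fin (2*n+1)) (Fin (2*n+1)) ℂ)
    (hd12 : H12.IsDiag) (hd13 : H13.IsDiag) (hd21 : H21.IsDiag)
    (hd23 : H23.IsDiag) (hd31 : H31.IsDiag) (hd32 : H32.IsDiag)
    (hu12 : IsUnit H12.det) (hu13 : IsUnit H13.det) (hu21 : IsUnit H21.det)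
    (hu23 : IsUnit H23.det) (hu31 : IsUnit H31.det) (hu32 : IsUnit H32.det) :
    let T : Matrix (Fin (2*n+1)) (Fin (2*n+1)) ℂ :=
      H12 * H21⁻¹ * H23 * H32⁻¹ * H31 * H13⁻¹
    let w : Fin (2*n+1) → ℂ := fun _ => 1
    let A : Matrix (Fin (2*n+1)) (Fin (n+1)) ℂ :=
      Matrix.of fun i j => (T ^ (j : ℕ) *ᵥ w) i
    let B : Matrix (Fin (2*n+1)) (Fin n) ℂ :=
      Matrix.of fun i j => (T ^ ((j : ℕ) + 1) *ᵥ w) i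
    let C : Matrix (Fin (2*n+1)) (Fin n) ℂ :=
      Matrix.of fun i j => (T ^ (j : ℕ) *ᵥ w) i
    let V1 := A
    let V3 := H23⁻¹ * H21 * B
    let V2 := H32⁻¹ * H31 * C
    (H12 * V2 = H13 * V3) ∧
    (∀ j : Fin n, ∃ j' : Fin (n+1),
      (fun i => (H23 * V3) i j) = (fun i => (H21 * V1) i j')) ∧
    (∀ j : Fin n, ∃ j' : Fin (n+1),
      (fun i => (H32 * V2) i j) = (fun i => (H31 * V1) i j')) :=
  stmt_3_general n H12 H13 H21 H23 H31 H32 hd12 hd13 hd21 hd23 hd31 hd32 hu13 hu21 hu23 hu32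
end

section
/- Let M ≥ 1 and r ≥ 1, and let H^{[kj]}, for k, j ∈ {1,2,3}, be invertible diagonal M × M complex matrices such that the product T = (H^{[13]})^{-1} H^{[23]} (H^{[21]})^{-1} H^{[12]} (H^{[32]})^{-1} H^{[31]} has pairwise distinct diagonal entries. Suppose V^{[1]}, V^{[2]}, V^{[3]} are M × r complex matrices, each of rank r, satisfying the full interference alignment conditions: span(H^{[13]} V^{[3]}) = span(H^{[12]} V^{[2]}), span(H^{[23]} V^{[3]}) = span(H^{[21]} V^{[1]}), and span(H^{[32]} V^{[2]}) = span(H^{[31]} V^{[1]}). Then the desired-signal subspace and the interference subspace at receiver 1 intersect nontrivially: span(H^{[11]} V^{[1]}) ∩ span(H^{[12]} V^{[2]}) ≠ {0}. -/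
/-!
Let `Wₖ` be the column span of `Vₖ`. Each alignment condition identifies one `Wₖ` with the image
of another under a product of channel matrices, and chaining the three conditions around the
cycle `W1 → W2 → W3 → W1` shows that `W1` is invariant under the diagonal matrix `T`. A nonzero
invariant subspace contains an eigenvector of `T`, and since the diagonal entries of `T` are
distinct, its eigenvectors are multiples of standard basis vectors, so `W1` contains some `eᵢ`.
Invertible diagonal matrices fix the line through `eᵢ`, hence `eᵢ` lies in both `H11 W1` and
`H12 W2 = H12 H32⁻¹ H31 W1`.
-/

open Matrix

theorem Module.End.exists_hasEigenvector_mem_of_map_le {K V : Type*} [Field K] [IsAlgClosed K]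
    [AddCommGroup V] [Module K V] [FiniteDimensional K V] {f : Module.End K V}
    {W : Submodule K V} (hW : W ≠ ⊥) (hfW : W.map f ≤ W) :
    ∃ μ, ∃ v ∈ W, f.HasEigenvector μ v := by
  have : Nontrivial W := Submodule.nontrivial_iff_ne_bot.mpr hW
  let g := f.restrict fun x hx => hfW (Submodule.mem_map_of_mem hx)
  obtain ⟨μ, hμ⟩ := Module.End.exists_eigenvalue g
  obtain ⟨w, hw⟩ := hμ.exists_hasEigenvector
  refine ⟨μ, w, w.2, Module.End.mem_eigenspace_iff.mpr ?_, ?_⟩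
  · exact congrArg Subtype.val (Module.End.mem_eigenspace_iff.mp hw.1)
  · exact fun h => hw.2 (Subtype.ext h)

namespace Matrix

theorem range_mulVecLin_mul {l m n R : Type*} [Fintype m] [Fintype n] [CommSemiring R]
    (A : Matrix l m R) (B : Matrix m n R) :
    LinearMap.range (A * B).mulVecLin = (LinearMap.range B.mulVecLin).map A.mulVecLin := by
  rw [mulVecLin_mul, LinearMap.range_comp]

variable {n : Type*} [Fintype n] [DecidableEq n]

theorem IsDiag.mul {R : Type*} [CommSemiring R] {A B : Matrix n n R} (hA : A.IsDiag)
    (hB : B.IsDiag) : (A * B).IsDiag := by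
  rw [← hA.diagonal_diag, ← hB.diagonal_diag, diagonal_mul_diagonal]
  exact isDiag_diagonal _

theorem IsDiag.commute {R : Type*} [CommSemiring R] {A B : Matrix n n R} (hA : A.IsDiag)
    (hB : B.IsDiag) : Commute A B := by
  rw [← hA.diagonal_diag, ← hB.diagonal_diag]
  exact commute_diagonal _ _

theorem IsDiag.inv {R : Type*} [CommRing R] {A : Matrix n n R} (hA : A.IsDiag) :
    A⁻¹.IsDiag := by
  rw [← hA.diagonal_diag, inv_diagonal]
  exact isDiag_diagonal _

variable {K : Type*} [Field K]

theorem map_mulVecLin_nonsing_inv_map {A : Matrix n n K} (hA : IsUnit A.det)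
    (W : Submodule K (n → K)) : (W.map A.mulVecLin).map A⁻¹.mulVecLin = W := by
  rw [← Submodule.map_comp, ← mulVecLin_mul, nonsing_inv_mul A hA, mulVecLin_one,
    Submodule.map_id]

namespace IsDiag

theorem apply_ne_zero {A : Matrix n n K} (hA : A.IsDiag) (hu : IsUnit A.det) (i : n) :
    A i i ≠ 0 := by
  rw [← hA.diagonal_diag, det_diagonal] at hu
  exact Finset.prod_ne_zero_iff.mp hu.ne_zero i (Finset.mem_univ i)

theorem mulVec_single {A : Matrix n n K} (hA : A.IsDiag) (i : n) (x : K) :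
    A *ᵥ Pi.single i x = Pi.single i (A i i * x) := by
  have h := diagonal_mulVec_single A.diag i x
  rw [hA.diagonal_diag] at h
  exact h

theorem single_mem_map {A : Matrix n n K} (hA : A.IsDiag) (hu : IsUnit A.det)
    {W : Submodule K (n → K)} {i : n} (hi : Pi.single i 1 ∈ W) :
    Pi.single i (1 : K) ∈ W.map A.mulVecLin := by
  have h : A.mulVecLin ((A i i)⁻¹ • Pi.single i 1) = Pi.single i 1 := by
    rw [map_smul, mulVecLin_apply, hA.mulVec_single, mul_one, ← Pi.single_smul, smul_eq_mul,
      inv_mul_cancel₀ (hA.apply_ne_zero hu i)]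
  exact h ▸ Submodule.mem_map_of_mem (W.smul_mem _ hi)

theorem single_mem_span_of_hasEigenvector {T : Matrix n n K} (hT : T.IsDiag)
    (hinj : Function.Injective T.diag) {μ : K} {v : n → K}
    (hv : Module.End.HasEigenvector T.mulVecLin μ v) : ∃ i, Pi.single i (1 : K) ∈ K ∙ v := by
  have hcoord (k : n) : T k k * v k = μ * v k := by
    have h := congrFun hv.apply_eq_smul k
    rwa [mulVecLin_apply, ← hT.diagonal_diag, mulVec_diagonal] at h
  obtain ⟨i, hi⟩ : ∃ i, v i ≠ 0 := Function.ne_iff.mp hv.2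
  have hvanish (k : n) (hk : k ≠ i) : v k = 0 := by
    by_contra hvk
    exact hk (hinj ((mul_right_cancel₀ hvk (hcoord k)).trans
      (mul_right_cancel₀ hi (hcoord i)).symm))
  refine ⟨i, Submodule.mem_span_singleton.mpr ⟨(v i)⁻¹, funext fun k => ?_⟩⟩
  rcases eq_or_ne k i with rfl | hk
  · simp [inv_mul_cancel₀ hi]
  · simp [hvanish k hk, hk]

theorem exists_single_mem_of_map_le [IsAlgClosed K] {T : Matrix n n K} (hT : T.IsDiag)
    (hinj : Function.Injective T.diag) {W : Submodule K (n → K)} (hW : W ≠ ⊥)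
    (hTW : W.map T.mulVecLin ≤ W) : ∃ i, Pi.single i (1 : K) ∈ W := by
  obtain ⟨μ, v, hvW, hv⟩ := Module.End.exists_hasEigenvector_mem_of_map_le hW hTW
  obtain ⟨i, hi⟩ := hT.single_mem_span_of_hasEigenvector hinj hv
  exact ⟨i, (Submodule.span_singleton_le_iff_mem v W).mpr hvW hi⟩

end IsDiag

end Matrix

theorem stmt_6_general (M r : ℕ) (hr : 1 ≤ r)
    (H11 H12 H13 H21 H23 H31 H32 : Matrix (Fin M) (Fin M) ℂ)
    (hd11 : H11.IsDiag) (hd12 : H12.IsDiag) (hd13 : H13.IsDiag)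
    (hd21 : H21.IsDiag) (hd23 : H23.IsDiag) (hd31 : H31.IsDiag) (hd32 : H32.IsDiag)
    (hu11 : IsUnit H11.det) (hu12 : IsUnit H12.det) (hu13 : IsUnit H13.det)
    (hu21 : IsUnit H21.det)
    (hu31 : IsUnit H31.det) (hu32 : IsUnit H32.det)
    (hT : ∀ i j : Fin M, i ≠ j →
      (H13⁻¹ * H23 * H21⁻¹ * H12 * H32⁻¹ * H31) i i ≠
      (H13⁻¹ * H23 * H21⁻¹ * H12 * H32⁻¹ * H31) j j)
    (V1 V2 V3 : Matrix (Fin M) (Fin r) ℂ)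
    (hrk1 : V1.rank = r)
    (ha1 : LinearMap.range (H13 * V3).mulVecLin = LinearMap.range (H12 * V2).mulVecLin)
    (ha2 : LinearMap.range (H23 * V3).mulVecLin = LinearMap.range (H21 * V1).mulVecLin)
    (ha3 : LinearMap.range (H32 * V2).mulVecLin = LinearMap.range (H31 * V1).mulVecLin) :
    LinearMap.range (H11 * V1).mulVecLin ⊓ LinearMap.range (H12 * V2).mulVecLin ≠ ⊥ := by
  simp only [range_mulVecLin_mul] at ha1 ha2 ha3 ⊢
  set W1 := LinearMap.range V1.mulVecLin
  set W2 := LinearMap.range V2.mulVecLin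
  set W3 := LinearMap.range V3.mulVecLin
  have hW2 : (W1.map H31.mulVecLin).map H32⁻¹.mulVecLin = W2 := by
    rw [← ha3, map_mulVecLin_nonsing_inv_map hu32]
  have hW3 : (W2.map H12.mulVecLin).map H13⁻¹.mulVecLin = W3 := by
    rw [← ha1, map_mulVecLin_nonsing_inv_map hu13]
  have hW1 : (W3.map H23.mulVecLin).map H21⁻¹.mulVecLin = W1 := by
    rw [ha2, map_mulVecLin_nonsing_inv_map hu21]
  -- diagonal matrices commute, so `T` can be reordered to follow the alignment chain
  have hT_chain : H13⁻¹ * H23 * H21⁻¹ * H12 * H32⁻¹ * H31 =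
      H21⁻¹ * H23 * H13⁻¹ * H12 * H32⁻¹ * H31 := by
    rw [(hd13.inv.commute hd23).eq, mul_assoc H23, (hd13.inv.commute hd21.inv).eq, ← mul_assoc,
      (hd23.commute hd21.inv).eq]
  have hTW1 : W1.map (H13⁻¹ * H23 * H21⁻¹ * H12 * H32⁻¹ * H31).mulVecLin = W1 := by
    simp only [hT_chain, mulVecLin_mul, Submodule.map_comp]
    rw [hW2, hW3, hW1]
  have hW1_ne : W1 ≠ ⊥ := by
    rw [Ne, ← Submodule.finrank_eq_zero]
    change Module.finrank ℂ W1 = r at hrk1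
    omega
  have hT_diag : (H13⁻¹ * H23 * H21⁻¹ * H12 * H32⁻¹ * H31).IsDiag :=
    ((((hd13.inv.mul hd23).mul hd21.inv).mul hd12).mul hd32.inv).mul hd31
  obtain ⟨i, hi⟩ := hT_diag.exists_single_mem_of_map_le
    (fun i j hij => by_contra fun hne => hT i j hne hij) hW1_ne hTW1.le
  refine (Submodule.ne_bot_iff _).mpr ⟨Pi.single i 1, ⟨hd11.single_mem_map hu11 hi, ?_⟩, by simp⟩
  rw [← hW2]
  exact hd12.single_mem_map hu12 <| hd32.inv.single_mem_map (isUnit_nonsing_inv_det _ hu32) <|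
    hd31.single_mem_map hu31 hi

/-- If the full interference alignment conditions hold on an `M`-symbol extension of the
single-antenna 3-user interference channel (all channel matrices diagonal and invertible,
with the cyclic product `T` having pairwise distinct diagonal entries), then the desired
signal subspace and the interference subspace at receiver 1 intersect nontrivially. -/
theorem stmt_6 (M r : ℕ) (hM : 1 ≤ M) (hr : 1 ≤ r)
    (H11 H12 H13 H21 H23 H31 H32 : Matrix (Fin M) (Fin M) ℂ)
    (hd11 : H11.IsDiag) (hd12 : H12.IsDiag) (hd13 : H13.IsDiag)
    (hd21 : H21.IsDiag) (hd23 : H23.IsDiag) (hd31 : H31.IsDiag) (hd32 : H32.IsDiag)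
    (hu11 : IsUnit H11.det) (hu12 : IsUnit H12.det) (hu13 : IsUnit H13.det)
    (hu21 : IsUnit H21.det) (hu23 : IsUnit H23.det)
    (hu31 : IsUnit H31.det) (hu32 : IsUnit H32.det)
    (hT : ∀ i j : Fin M, i ≠ j →
      (H13⁻¹ * H23 * H21⁻¹ * H12 * H32⁻¹ * H31) i i ≠
      (H13⁻¹ * H23 * H21⁻¹ * H12 * H32⁻¹ * H31) j j)
    (V1 V2 V3 : Matrix (Fin M) (Fin r) ℂ)
    (hrk1 : V1.rank = r) (hrk2 : V2.rank = r) (hrk3 : V3.rank = r)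
    (ha1 : LinearMap.range (H13 * V3).mulVecLin = LinearMap.range (H12 * V2).mulVecLin)
    (ha2 : LinearMap.range (H23 * V3).mulVecLin = LinearMap.range (H21 * V1).mulVecLin)
    (ha3 : LinearMap.range (H32 * V2).mulVecLin = LinearMap.range (H31 * V1).mulVecLin) :
    LinearMap.range (H11 * V1).mulVecLin ⊓ LinearMap.range (H12 * V2).mulVecLin ≠ ⊥ :=
  stmt_6_general M r hr H11 H12 H13 H21 H23 H31 H32 hd11 hd12 hd13 hd21 hd23 hd31 hd32 hu11 hu12
    hu13 hu21 hu31 hu32 hT V1 V2 V3 hrk1 ha1 ha2 ha3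
end

section
/- Let M ≥ 2 and let H^{[ij]}, for i, j ∈ {1,2,3}, be invertible M × M complex matrices. Define E = (H^{[31]})^{-1} H^{[32]} (H^{[12]})^{-1} H^{[13]} (H^{[23]})^{-1} H^{[21]}, F = (H^{[32]})^{-1} H^{[31]}, and G = (H^{[23]})^{-1} H^{[21]}. Let e_1, …, e_m (1 ≤ m ≤ M) be eigenvectors of E, let V^{[1]} be the M × m matrix with columns e_1, …, e_m, and set V^{[2]} = F V^{[1]}, V^{[3]} = G V^{[1]}. Then the interference alignment equations hold: span(H^{[12]} V^{[2]}) = span(H^{[13]} V^{[3]}), H^{[21]} V^{[1]} = H^{[23]} V^{[3]}, and H^{[31]} V^{[1]} = H^{[32]} V^{[2]}. -/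
/-!
The equalities `H²¹V¹ = H²³V³` and `H³¹V¹ = H³²V²` are cancellations. For the spans, the
product defining `E` telescopes, `H¹²F E = H¹³G`, so `H¹³V³ = H¹²F (E V¹)`; and an invertible
`E` maps the span of its eigenvectors onto itself (an eigenvector for `0` would vanish), so
`span(E V¹) = span(V¹)`.
-/

open Matrix

open Submodule Set in
theorem Module.End.map_span_range_eq_of_injective {K V ι : Type*} [Field K] [AddCommGroup V]
    [Module K V] {f : Module.End K V} (hf : Function.Injective f) {v : ι → V}
    (hv : ∀ i, ∃ μ : K, f (v i) = μ • v i) :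
    (span K (range v)).map f = span K (range v) := by
  apply le_antisymm
  · rw [map_span, span_le]
    rintro _ ⟨_, ⟨i, rfl⟩, rfl⟩
    obtain ⟨μ, hμ⟩ := hv i
    rw [SetLike.mem_coe, hμ]
    exact smul_mem _ μ (subset_span ⟨i, rfl⟩)
  · rw [span_le]
    rintro _ ⟨i, rfl⟩
    obtain ⟨μ, hμ⟩ := hv i
    by_cases hμ0 : μ = 0
    · have hvi : v i = 0 := hf (by rw [hμ, hμ0, zero_smul, map_zero])
      rw [SetLike.mem_coe, hvi]
      exact zero_mem _
    · refine ⟨μ⁻¹ • v i, smul_mem _ _ (subset_span ⟨i, rfl⟩), ?_⟩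
      rw [map_smul, hμ, smul_smul, inv_mul_cancel₀ hμ0, one_smul]

theorem Matrix.range_mulVecLin_mul_mul_of_isUnit {K l n ι : Type*} [Field K] [Fintype n]
    [DecidableEq n] [Fintype ι] (A : Matrix l n K) {E : Matrix n n K} (hE : IsUnit E.det)
    {V : Matrix n ι K} (hV : ∀ j, ∃ μ : K, E *ᵥ V.col j = μ • V.col j) :
    LinearMap.range (A * E * V).mulVecLin = LinearMap.range (A * V).mulVecLin := by
  have hinj : Function.Injective E.mulVecLin :=
    mulVec_injective_iff_isUnit.mpr ((isUnit_iff_isUnit_det E).mpr hE)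
  rw [Matrix.mul_assoc, mulVecLin_mul, mulVecLin_mul, mulVecLin_mul, LinearMap.range_comp,
    LinearMap.range_comp, LinearMap.range_comp, range_mulVecLin,
    Module.End.map_span_range_eq_of_injective hinj hV]

theorem stmt_13_general (M m : ℕ)
    (H12 H13 H21 H23 H31 H32 : Matrix (Fin M) (Fin M) ℂ)
    (hu12 : IsUnit H12.det) (hu13 : IsUnit H13.det) (hu21 : IsUnit H21.det)
    (hu23 : IsUnit H23.det) (hu31 : IsUnit H31.det) (hu32 : IsUnit H32.det)
    (e : Fin m → (Fin M → ℂ))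
    (heig : ∀ i, ∃ μ : ℂ,
      (H31⁻¹ * H32 * H12⁻¹ * H13 * H23⁻¹ * H21) *ᵥ e i = μ • e i) :
    let V1 : Matrix (Fin M) (Fin m) ℂ := Matrix.of fun i j => e j i
    let V2 := (H32⁻¹ * H31) * V1
    let V3 := (H23⁻¹ * H21) * V1
    LinearMap.range (H12 * V2).mulVecLin = LinearMap.range (H13 * V3).mulVecLin ∧
    H21 * V1 = H23 * V3 ∧
    H31 * V1 = H32 * V2 := by
  intro V1 V2 V3
  set E := H31⁻¹ * H32 * H12⁻¹ * H13 * H23⁻¹ * H21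
  have hE : IsUnit E.det := by
    simp only [E, det_mul, IsUnit.mul_iff, isUnit_nonsing_inv_det_iff, hu12, hu13,
      hu21, hu23, hu31, hu32, and_self]
  have hH13 : H13 * (H23⁻¹ * H21) = H12 * (H32⁻¹ * H31) * E := by
    simp only [E, Matrix.mul_assoc, mul_nonsing_inv_cancel_left _ _ hu31,
      nonsing_inv_mul_cancel_left _ _ hu32, mul_nonsing_inv_cancel_left _ _ hu12]
  refine ⟨?_, ?_, ?_⟩
  · rw [show H13 * V3 = H12 * (H32⁻¹ * H31) * E * V1 by rw [← hH13, Matrix.mul_assoc],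
      range_mulVecLin_mul_mul_of_isUnit (V := V1) _ hE heig, Matrix.mul_assoc]
  · simp only [V3, Matrix.mul_assoc, mul_nonsing_inv_cancel_left _ _ hu23]
  · simp only [V2, Matrix.mul_assoc, mul_nonsing_inv_cancel_left _ _ hu32]

/-- MIMO interference alignment with constant channel matrices: if the columns of
`V¹` are eigenvectors of `E = (H³¹)⁻¹H³²(H¹²)⁻¹H¹³(H²³)⁻¹H²¹` and
`V² = (H³²)⁻¹H³¹ V¹`, `V³ = (H²³)⁻¹H²¹ V¹`, then
`span(H¹²V²) = span(H¹³V³)`, `H²¹V¹ = H²³V³` and `H³¹V¹ = H³²V²`. -/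
theorem stmt_13 (M m : ℕ) (hM : 2 ≤ M) (hm1 : 1 ≤ m) (hmM : m ≤ M)
    (H12 H13 H21 H23 H31 H32 : Matrix (Fin M) (Fin M) ℂ)
    (hu12 : IsUnit H12.det) (hu13 : IsUnit H13.det) (hu21 : IsUnit H21.det)
    (hu23 : IsUnit H23.det) (hu31 : IsUnit H31.det) (hu32 : IsUnit H32.det)
    (e : Fin m → (Fin M → ℂ)) (he0 : ∀ i, e i ≠ 0)
    (heig : ∀ i, ∃ μ : ℂ,
      (H31⁻¹ * H32 * H12⁻¹ * H13 * H23⁻¹ * H21) *ᵥ e i = μ • e i) :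
    let V1 : Matrix (Fin M) (Fin m) ℂ := Matrix.of fun i j => e j i
    let V2 := (H32⁻¹ * H31) * V1
    let V3 := (H23⁻¹ * H21) * V1
    LinearMap.range (H12 * V2).mulVecLin = LinearMap.range (H13 * V3).mulVecLin ∧
    H21 * V1 = H23 * V3 ∧
    H31 * V1 = H32 * V2 :=
  stmt_13_general M m H12 H13 H21 H23 H31 H32 hu12 hu13 hu21 hu23 hu31 hu32 e heig
end

section
/- Fix n ≥ 1 and let T and D be (2n+1) × (2n+1) diagonal real matrices, and let w be the all-ones column vector in ℝ^{2n+1}. Consider the (2n+1) × (2n+1) matrix S = [w, Tw, T²w, …, T^n w, Dw, DTw, DT²w, …, DT^{n-1} w]. Then det S, viewed as a polynomial in the diagonal entries λ_1, …, λ_{2n+1} of T and κ_1, …, κ_{2n+1} of D, is not the zero polynomial; in particular, there exist diagonal matrices T and D for which S is invertible. -/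
open Matrix MvPolynomial

lemma stmt14_aux {m n : ℕ} (R : Type*) [CommRing R] (lam kap : Fin m → R)
    (h : ∀ i, kap i = lam i ^ (n+1)) :
    (Matrix.of fun i j : Fin m =>
        if (j : ℕ) ≤ n then ((Matrix.diagonal lam) ^ (j : ℕ) *ᵥ (fun _ => (1:R))) i
        else ((Matrix.diagonal kap * (Matrix.diagonal lam) ^ ((j : ℕ) - (n+1))) *ᵥ
          (fun _ => (1:R))) i) = Matrix.vandermonde lam := by
  ext i j
  simp only [Matrix.of_apply, Matrix.vandermonde_apply, Matrix.diagonal_pow,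
    Matrix.diagonal_mul_diagonal, Matrix.mulVec_diagonal, Pi.pow_apply, mul_one, Pi.mul_apply]
  split_ifs with hj
  · rfl
  · rw [h i, ← pow_add]
    congr 1
    omega

/-- With `T` and `D` diagonal matrices whose diagonal entries `λ_1,…,λ_{2n+1}` and
`κ_1,…,κ_{2n+1}` are indeterminates, and `w` the all-ones vector, the determinant of
`S = [w, Tw, …, Tⁿw, Dw, DTw, …, DTⁿ⁻¹w]` is not the zero polynomial; in particular
there exist real diagonal matrices `T`, `D` for which `S` is invertible. -/
theorem stmt_14 (n : ℕ) (hn : 1 ≤ n) :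
    (letI R := MvPolynomial (Fin (2*n+1) ⊕ Fin (2*n+1)) ℝ
     letI T : Matrix (Fin (2*n+1)) (Fin (2*n+1)) R :=
       Matrix.diagonal (fun l => MvPolynomial.X (Sum.inl l))
     letI D : Matrix (Fin (2*n+1)) (Fin (2*n+1)) R :=
       Matrix.diagonal (fun l => MvPolynomial.X (Sum.inr l))
     letI w : Fin (2*n+1) → R := fun _ => 1
     (Matrix.of fun i j : Fin (2*n+1) =>
        if (j : ℕ) ≤ n then (T ^ (j : ℕ) *ᵥ w) i
        else ((D * T ^ ((j : ℕ) - (n+1))) *ᵥ w) i).det ≠ 0) ∧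
    ∃ lam kap : Fin (2*n+1) → ℝ,
      IsUnit (Matrix.of fun i j : Fin (2*n+1) =>
        if (j : ℕ) ≤ n then ((Matrix.diagonal lam) ^ (j : ℕ) *ᵥ (fun _ => (1:ℝ))) i
        else ((Matrix.diagonal kap * (Matrix.diagonal lam) ^ ((j : ℕ) - (n+1))) *ᵥ
          (fun _ => (1:ℝ))) i).det := by
  set lam : Fin (2*n+1) → ℝ := fun i => (i : ℝ) with hlam
  set kap : Fin (2*n+1) → ℝ := fun i => (i : ℝ) ^ (n+1) with hkap
  have hinj : Function.Injective lam := by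
    intro a b hab
    have : ((a : ℕ) : ℝ) = ((b : ℕ) : ℝ) := hab
    exact Fin.ext (Nat.cast_injective this)
  have hreal : (Matrix.of fun i j : Fin (2*n+1) =>
        if (j : ℕ) ≤ n then ((Matrix.diagonal lam) ^ (j : ℕ) *ᵥ (fun _ => (1:ℝ))) i
        else ((Matrix.diagonal kap * (Matrix.diagonal lam) ^ ((j : ℕ) - (n+1))) *ᵥ
          (fun _ => (1:ℝ))) i).det ≠ 0 := by
    rw [stmt14_aux ℝ lam kap (fun i => rfl)]
    exact (Matrix.det_vandermonde_ne_zero_iff).2 hinj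
  constructor
  · intro hdet
    -- evaluate polynomials at lam / kap
    set ev : MvPolynomial (Fin (2*n+1) ⊕ Fin (2*n+1)) ℝ →+* ℝ :=
      (MvPolynomial.eval (Sum.elim lam kap)) with hev
    apply hreal
    have hmap : ((Matrix.of fun i j : Fin (2*n+1) =>
        if (j : ℕ) ≤ n then ((Matrix.diagonal fun l => (MvPolynomial.X (Sum.inl l) : MvPolynomial (Fin (2*n+1) ⊕ Fin (2*n+1)) ℝ)) ^ (j : ℕ) *ᵥ (fun _ => 1)) i
        else (((Matrix.diagonal fun l => MvPolynomial.X (Sum.inr l)) *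
          (Matrix.diagonal fun l => MvPolynomial.X (Sum.inl l)) ^ ((j : ℕ) - (n+1))) *ᵥ
          (fun _ => 1)) i).map ev) =
        (Matrix.of fun i j : Fin (2*n+1) =>
        if (j : ℕ) ≤ n then ((Matrix.diagonal lam) ^ (j : ℕ) *ᵥ (fun _ => (1:ℝ))) i
        else ((Matrix.diagonal kap * (Matrix.diagonal lam) ^ ((j : ℕ) - (n+1))) *ᵥ
          (fun _ => (1:ℝ))) i) := by
      ext i j
      simp only [Matrix.map_apply, Matrix.of_apply, Matrix.diagonal_pow,
        Matrix.diagonal_mul_diagonal, Matrix.mulVec_diagonal, Pi.pow_apply, Pi.mul_apply,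
        mul_one]
      split_ifs with hj
      · simp [hev, hlam]
      · simp [hev, hlam, hkap]
    have := congrArg ev hdet
    rw [RingHom.map_det] at this
    simp only [RingHom.mapMatrix_apply] at this
    rw [hmap] at this
    simpa using this
  · exact ⟨lam, kap, isUnit_iff_ne_zero.2 hreal⟩
end
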